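/- Let ρ : ℝ² → ℝ be a bounded, measurable, compactly supported function. Then the function (x,y) ↦ ρ(x)·ρ(y)·⟨x, x−y⟩/‖x−y‖² is Lebesgue integrable on ℝ² × ℝ² (off the null set x = y) and ∫_{ℝ²}∫_{ℝ²} ρ(x)·ρ(y)·(⟨x, x−y⟩/‖x−y‖²) dx dy = (1/2)·(∫_{ℝ²} ρ(x) dx)². -/

import Mathlib

open MeasureTheory RealInnerProductSpace

open Set Metric ENNReal in
private lemma ks_aux_int (r : ℝ) :
    IntegrableOn (fun z : EuclideanSpace ℝ (Fin 2) => ‖z‖⁻¹) (Metric.ball 0 r) := by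
  set E := EuclideanSpace ℝ (Fin 2)
  set μ := (volume : Measure E).restrict (Metric.ball 0 r)
  have hmeas : Measurable fun z : E => ‖z‖⁻¹ := measurable_norm.inv
  refine ⟨hmeas.aestronglyMeasurable, ?_⟩
  rw [hasFiniteIntegral_iff_ofReal (Filter.Eventually.of_forall fun z => by positivity)]
  rw [lintegral_eq_lintegral_meas_lt μ (Filter.Eventually.of_forall fun z => by positivity)
    hmeas.aemeasurable]
  have hVr : volume (Metric.ball (0 : E) r) < ⊤ := measure_ball_lt_top
  have hV1 : volume (Metric.ball (0 : E) 1) < ⊤ := measure_ball_lt_top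
  have hb : ∀ t : ℝ, 0 < t →
      μ {a : E | t < ‖a‖⁻¹} ≤ ENNReal.ofReal (t⁻¹ ^ 2) * volume (Metric.ball (0 : E) 1) := by
    intro t ht
    have hsub : {a : E | t < ‖a‖⁻¹} ⊆ Metric.ball 0 t⁻¹ := by
      intro a ha
      simp only [mem_setOf_eq] at ha
      have ha0 : 0 < ‖a‖⁻¹ := ht.trans ha
      have : ‖a‖ < t⁻¹ := by
        rw [← inv_inv ‖a‖]
        exact inv_strictAnti₀ ht ha
      simpa [Metric.mem_ball, dist_zero_right] using this
    calc μ {a : E | t < ‖a‖⁻¹} ≤ volume {a : E | t < ‖a‖⁻¹} :=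
          Measure.restrict_le_self _
      _ ≤ volume (Metric.ball (0 : E) t⁻¹) := measure_mono hsub
      _ = ENNReal.ofReal (t⁻¹ ^ Module.finrank ℝ E) * volume (Metric.ball (0 : E) 1) :=
          Measure.addHaar_ball volume 0 (by positivity)
      _ = ENNReal.ofReal (t⁻¹ ^ 2) * volume (Metric.ball (0 : E) 1) := by
          rw [finrank_euclideanSpace_fin]

  have hsplit : (Ioi (0 : ℝ)) = Ioc (0 : ℝ) 1 ∪ Ioi 1 := (Ioc_union_Ioi_eq_Ioi zero_le_one).symm
  rw [hsplit, lintegral_union measurableSet_Ioi (Ioc_disjoint_Ioi le_rfl)]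
  have h1 : ∫⁻ t in Ioc (0 : ℝ) 1, μ {a : E | t < ‖a‖⁻¹} < ⊤ := by
    calc ∫⁻ t in Ioc (0 : ℝ) 1, μ {a : E | t < ‖a‖⁻¹}
        ≤ ∫⁻ _ in Ioc (0 : ℝ) 1, volume (Metric.ball (0 : E) r) :=
          lintegral_mono fun t => (measure_mono (Set.subset_univ _)).trans_eq
            (by rw [Measure.restrict_apply_univ])
      _ = volume (Metric.ball (0 : E) r) * volume (Ioc (0 : ℝ) 1) := by
          rw [setLIntegral_const]
      _ < ⊤ := by
          apply ENNReal.mul_lt_top hVr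
          simp [Real.volume_Ioc]
  have h2 : ∫⁻ t in Ioi (1 : ℝ), μ {a : E | t < ‖a‖⁻¹} < ⊤ := by
    have hmono : ∫⁻ t in Ioi (1 : ℝ), μ {a : E | t < ‖a‖⁻¹}
        ≤ ∫⁻ t in Ioi (1 : ℝ),
            ENNReal.ofReal (t⁻¹ ^ 2) * volume (Metric.ball (0 : E) 1) := by
      have hgm : Measurable fun t : ℝ => ENNReal.ofReal (t⁻¹ ^ 2) :=
        (measurable_inv.pow_const 2).ennreal_ofReal
      apply setLIntegral_mono_ae (hgm.mul_const _).aemeasurable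
      exact Filter.Eventually.of_forall fun t ht => hb t (lt_trans one_pos ht)
    refine lt_of_le_of_lt hmono ?_
    rw [lintegral_mul_const _ ((measurable_inv.pow_const 2).ennreal_ofReal)]
    apply ENNReal.mul_lt_top _ hV1
    have hint : IntegrableOn (fun t : ℝ => t ^ (-2 : ℝ)) (Ioi 1) :=
      integrableOn_Ioi_rpow_of_lt (by norm_num) one_pos
    have hcongr : ∫⁻ t in Ioi (1 : ℝ), ENNReal.ofReal (t⁻¹ ^ 2)
        = ∫⁻ t in Ioi (1 : ℝ), ENNReal.ofReal (t ^ (-2 : ℝ)) := by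
      apply setLIntegral_congr_fun measurableSet_Ioi
      intro t ht
      show ENNReal.ofReal (t⁻¹ ^ 2) = ENNReal.ofReal (t ^ (-2 : ℝ))
      have ht0 : (0 : ℝ) < t := lt_trans one_pos ht
      congr 1
      rw [inv_pow, ← Real.rpow_natCast t 2, ← Real.rpow_neg ht0.le]
      norm_num
    rw [hcongr]
    exact hint.lintegral_lt_top
  exact ENNReal.add_lt_top.mpr ⟨h1, h2⟩

/-- The symmetrization identity behind the 2D Keller–Segel variance identity:
`∫∫ ρ(x)ρ(y) ⟨x, x-y⟩/‖x-y‖² dx dy = (1/2)(∫ρ)²`. -/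
theorem keller_segel_symmetrization_identity
    (ρ : EuclideanSpace ℝ (Fin 2) → ℝ)
    (hmeas : Measurable ρ)
    (hbdd : ∃ C : ℝ, ∀ x, |ρ x| ≤ C)
    (hsupp : HasCompactSupport ρ) :
    Integrable (fun p : EuclideanSpace ℝ (Fin 2) × EuclideanSpace ℝ (Fin 2) =>
        ρ p.1 * ρ p.2 * (⟪p.1, p.1 - p.2⟫ / ‖p.1 - p.2‖ ^ 2))
      (volume.prod volume) ∧
    ∫ x : EuclideanSpace ℝ (Fin 2), ∫ y : EuclideanSpace ℝ (Fin 2),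
        ρ x * ρ y * (⟪x, x - y⟫ / ‖x - y‖ ^ 2) =
      (1 / 2) * (∫ x : EuclideanSpace ℝ (Fin 2), ρ x) ^ 2 := by
  classical
  obtain ⟨C₀, hC⟩ := hbdd
  obtain ⟨C, hC', hC0⟩ : ∃ C : ℝ, (∀ x, |ρ x| ≤ C) ∧ (0:ℝ) ≤ C :=
    ⟨max C₀ 0, fun x => (hC x).trans (le_max_left _ _), le_max_right _ _⟩
  obtain ⟨R₀, hR₀⟩ := hsupp.isCompact.isBounded.subset_closedBall 0
  obtain ⟨R, hR0, hsupp'⟩ :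
      ∃ R : ℝ, (0:ℝ) ≤ R ∧ ∀ x, ρ x ≠ 0 → ‖x‖ ≤ R := by
    refine ⟨max R₀ 0, le_max_right _ _, fun x hx => ?_⟩
    have hmem : x ∈ Metric.closedBall (0:(EuclideanSpace ℝ (Fin 2))) R₀ :=
      hR₀ (subset_tsupport ρ (Function.mem_support.mpr hx))
    rw [Metric.mem_closedBall, dist_zero_right] at hmem
    exact hmem.trans (le_max_left _ _)
  set F : (EuclideanSpace ℝ (Fin 2)) × (EuclideanSpace ℝ (Fin 2)) → ℝ := fun p => ρ p.1 * ρ p.2 * (⟪p.1, p.1 - p.2⟫ / ‖p.1 - p.2‖ ^ 2)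
    with hFdef
  have hFm : Measurable F := by
    apply ((hmeas.comp measurable_fst).mul (hmeas.comp measurable_snd)).mul
    apply Measurable.div
    · exact (continuous_inner.comp
        (continuous_fst.prodMk (continuous_fst.sub continuous_snd))).measurable
    · exact ((continuous_fst.sub continuous_snd).norm.pow 2).measurable
  set g1 : (EuclideanSpace ℝ (Fin 2)) → ℝ := (Metric.closedBall (0:(EuclideanSpace ℝ (Fin 2))) R).indicator (fun _ => C ^ 2 * R) with hg1def
  set g2 : (EuclideanSpace ℝ (Fin 2)) → ℝ := (Metric.ball (0:(EuclideanSpace ℝ (Fin 2))) (2 * R + 1)).indicator (fun z => ‖z‖⁻¹) with hg2def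
  have hg1i : Integrable g1 := by
    rw [hg1def, integrable_indicator_iff measurableSet_closedBall]
    exact integrableOn_const measure_closedBall_lt_top.ne
  have hg2i : Integrable g2 := by
    rw [hg2def, integrable_indicator_iff measurableSet_ball]
    exact ks_aux_int _
  have hint : Integrable (fun p : (EuclideanSpace ℝ (Fin 2)) × (EuclideanSpace ℝ (Fin 2)) => g1 p.2 * g2 (p.1 - p.2)) (volume.prod volume) :=
    hg1i.convolution_integrand (ContinuousLinearMap.mul ℝ ℝ) hg2i
  have hg1nn : ∀ y, 0 ≤ g1 y := fun y =>
    Set.indicator_nonneg (fun _ _ => by positivity) _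
  have hg2nn : ∀ z, 0 ≤ g2 z := fun z =>
    Set.indicator_nonneg (fun _ _ => by positivity) _
  have hbound : ∀ p : (EuclideanSpace ℝ (Fin 2)) × (EuclideanSpace ℝ (Fin 2)), ‖F p‖ ≤ g1 p.2 * g2 (p.1 - p.2) := by
    intro p
    have hRHSnn : 0 ≤ g1 p.2 * g2 (p.1 - p.2) := mul_nonneg (hg1nn _) (hg2nn _)
    by_cases h1 : ρ p.1 = 0
    · simpa [hFdef, h1] using hRHSnn
    by_cases h2 : ρ p.2 = 0
    · simpa [hFdef, h2] using hRHSnn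
    have hx : ‖p.1‖ ≤ R := hsupp' _ h1
    have hy : ‖p.2‖ ≤ R := hsupp' _ h2
    have hg1v : g1 p.2 = C ^ 2 * R :=
      Set.indicator_of_mem (by simpa [Metric.mem_closedBall, dist_zero_right] using hy) _
    have hmem : p.1 - p.2 ∈ Metric.ball (0:(EuclideanSpace ℝ (Fin 2))) (2 * R + 1) := by
      rw [Metric.mem_ball, dist_zero_right]
      calc ‖p.1 - p.2‖ ≤ ‖p.1‖ + ‖p.2‖ := norm_sub_le _ _
        _ < 2 * R + 1 := by linarith
    have hg2v : g2 (p.1 - p.2) = ‖p.1 - p.2‖⁻¹ := Set.indicator_of_mem hmem _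
    rw [hg1v, hg2v]
    by_cases hxy : p.1 = p.2
    · have hz : F p = 0 := by simp [hFdef, hxy]
      rw [hz, norm_zero]
      positivity
    have hne : ‖p.1 - p.2‖ ≠ 0 := by
      simpa [sub_eq_zero] using hxy
    have hpos : (0:ℝ) < ‖p.1 - p.2‖ := lt_of_le_of_ne (norm_nonneg _) (Ne.symm hne)
    have hQ : |⟪p.1, p.1 - p.2⟫ / ‖p.1 - p.2‖ ^ 2| ≤ R / ‖p.1 - p.2‖ := by
      rw [abs_div, abs_of_nonneg (by positivity : (0:ℝ) ≤ ‖p.1 - p.2‖ ^ 2),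
        div_le_div_iff₀ (by positivity) hpos]
      calc |⟪p.1, p.1 - p.2⟫| * ‖p.1 - p.2‖
          ≤ ‖p.1‖ * ‖p.1 - p.2‖ * ‖p.1 - p.2‖ := by
            have := abs_real_inner_le_norm p.1 (p.1 - p.2)
            nlinarith [norm_nonneg (p.1 - p.2)]
        _ ≤ R * ‖p.1 - p.2‖ ^ 2 := by nlinarith [norm_nonneg (p.1 - p.2), norm_nonneg p.1]
    have habs : ‖F p‖ = |ρ p.1| * |ρ p.2| * |⟪p.1, p.1 - p.2⟫ / ‖p.1 - p.2‖ ^ 2| := by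
      simp only [hFdef]
      rw [Real.norm_eq_abs, abs_mul, abs_mul]
    rw [habs]
    have h1' : |ρ p.1| * |ρ p.2| * |⟪p.1, p.1 - p.2⟫ / ‖p.1 - p.2‖ ^ 2|
        ≤ C * C * (R / ‖p.1 - p.2‖) := by
      apply mul_le_mul (mul_le_mul (hC' _) (hC' _) (abs_nonneg _) hC0) hQ (abs_nonneg _)
      positivity
    calc |ρ p.1| * |ρ p.2| * |⟪p.1, p.1 - p.2⟫ / ‖p.1 - p.2‖ ^ 2|
        ≤ C * C * (R / ‖p.1 - p.2‖) := h1'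
      _ = C ^ 2 * R * ‖p.1 - p.2‖⁻¹ := by rw [div_eq_mul_inv]; ring
  have hF : Integrable F (volume.prod volume) :=
    hint.mono' hFm.aestronglyMeasurable (Filter.Eventually.of_forall hbound)
  refine ⟨hF, ?_⟩
  -- the diagonal is null
  have hdiag : (volume.prod volume) {p : (EuclideanSpace ℝ (Fin 2)) × (EuclideanSpace ℝ (Fin 2)) | p.1 = p.2} = 0 := by
    have hm : MeasurableSet {p : (EuclideanSpace ℝ (Fin 2)) × (EuclideanSpace ℝ (Fin 2)) | p.1 = p.2} :=
      measurableSet_eq_fun measurable_fst measurable_snd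
    rw [Measure.prod_apply hm]
    have hfib : ∀ x : (EuclideanSpace ℝ (Fin 2)), (Prod.mk x ⁻¹' {p : (EuclideanSpace ℝ (Fin 2)) × (EuclideanSpace ℝ (Fin 2)) | p.1 = p.2}) = {x} := by
      intro x; ext y; simp [eq_comm]
    simp [hfib]
  have hae_ne : ∀ᵐ p : (EuclideanSpace ℝ (Fin 2)) × (EuclideanSpace ℝ (Fin 2)) ∂(volume.prod volume), p.1 ≠ p.2 := by
    rw [ae_iff]
    convert hdiag using 2
    simp [not_not]
  have hae : (fun p : (EuclideanSpace ℝ (Fin 2)) × (EuclideanSpace ℝ (Fin 2)) => F p + F p.swap) =ᵐ[volume.prod volume]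
      (fun p => ρ p.1 * ρ p.2) := by
    filter_upwards [hae_ne] with p hp
    have hne : ‖p.1 - p.2‖ ≠ 0 := by simpa [sub_eq_zero] using hp
    have hN : (‖p.1 - p.2‖ ^ 2 : ℝ) ≠ 0 := pow_ne_zero 2 hne
    have h2sym : ‖p.2 - p.1‖ = ‖p.1 - p.2‖ := norm_sub_rev _ _
    have key : ⟪p.1, p.1 - p.2⟫ + ⟪p.2, p.2 - p.1⟫ = ‖p.1 - p.2‖ ^ 2 := by
      rw [← real_inner_self_eq_norm_sq]
      simp only [inner_sub_left, inner_sub_right]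
      rw [real_inner_comm p.2 p.1]
      ring
    show F p + F (p.2, p.1) = ρ p.1 * ρ p.2
    rw [hFdef]
    simp only
    rw [h2sym]
    calc ρ p.1 * ρ p.2 * (⟪p.1, p.1 - p.2⟫ / ‖p.1 - p.2‖ ^ 2)
          + ρ p.2 * ρ p.1 * (⟪p.2, p.2 - p.1⟫ / ‖p.1 - p.2‖ ^ 2)
        = ρ p.1 * ρ p.2 * ((⟪p.1, p.1 - p.2⟫ + ⟪p.2, p.2 - p.1⟫) / ‖p.1 - p.2‖ ^ 2) := by
          ring
      _ = ρ p.1 * ρ p.2 := by rw [key, div_self hN, mul_one]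
  have hswapI : Integrable (fun p : (EuclideanSpace ℝ (Fin 2)) × (EuclideanSpace ℝ (Fin 2)) => F p.swap) (volume.prod volume) := hF.swap
  have hswapint : ∫ p : (EuclideanSpace ℝ (Fin 2)) × (EuclideanSpace ℝ (Fin 2)), F p.swap ∂(volume.prod volume)
      = ∫ p : (EuclideanSpace ℝ (Fin 2)) × (EuclideanSpace ℝ (Fin 2)), F p ∂(volume.prod volume) := integral_prod_swap F
  have hprodmul : ∫ p : (EuclideanSpace ℝ (Fin 2)) × (EuclideanSpace ℝ (Fin 2)), ρ p.1 * ρ p.2 ∂(volume.prod volume)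
      = (∫ x : (EuclideanSpace ℝ (Fin 2)), ρ x) * ∫ x : (EuclideanSpace ℝ (Fin 2)), ρ x := integral_prod_mul ρ ρ
  have hsum : ∫ p : (EuclideanSpace ℝ (Fin 2)) × (EuclideanSpace ℝ (Fin 2)), (F p + F p.swap) ∂(volume.prod volume)
      = (∫ x : (EuclideanSpace ℝ (Fin 2)), ρ x) * ∫ x : (EuclideanSpace ℝ (Fin 2)), ρ x := by
    rw [integral_congr_ae hae, hprodmul]
  rw [integral_add hF hswapI, hswapint] at hsum
  have hII : ∫ x : (EuclideanSpace ℝ (Fin 2)), ∫ y : (EuclideanSpace ℝ (Fin 2)), ρ x * ρ y * (⟪x, x - y⟫ / ‖x - y‖ ^ 2)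
      = ∫ p : (EuclideanSpace ℝ (Fin 2)) × (EuclideanSpace ℝ (Fin 2)), F p ∂(volume.prod volume) :=
    MeasureTheory.integral_integral hF
  rw [hII]
  rw [sq]
  linarith
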